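/- Every poset with one-step closure is meet continuous. -/

import Mathlib

open Set

section OrderDefs

variable {L : Type*} [Preorder L]

/-- Downward closure `↓A`. -/
def dw (A : Set L) : Set L := {x | ∃ a ∈ A, x ≤ a}

/-- Upward closure `↑A`. -/
def up (A : Set L) : Set L := {x | ∃ a ∈ A, a ≤ x}

/-- Scott closure of a set. -/
def scottCl (A : Set L) : Set L := @closure L (Topology.scott L Set.univ) A

/-- `A' = {x : ∃ directed D ⊆ ↓A with x = sup D}`. -/
def oneStep (A : Set L) : Set L :=
  {x | ∃ D : Set L, D ⊆ dw A ∧ D.Nonempty ∧ DirectedOn (· ≤ ·) D ∧ IsLUB D x}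

/-- `A'' = {x : ∃ directed D ⊆ ↓A with x ≤ sup D}`. -/
def weakOneStep (A : Set L) : Set L :=
  {x | ∃ D : Set L, D ⊆ dw A ∧ D.Nonempty ∧ DirectedOn (· ≤ ·) D ∧ ∃ y, IsLUB D y ∧ x ≤ y}

/-- A poset has one-step closure if `cl(A) = A'` for all `A`. -/
def HasOneStepClosure (L : Type*) [Preorder L] : Prop :=
  ∀ A : Set L, scottCl A = oneStep A

/-- A poset has weak one-step closure if `cl(A) = A''` for all `A`. -/
def HasWeakOneStepClosure (L : Type*) [Preorder L] : Prop :=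
  ∀ A : Set L, scottCl A = weakOneStep A

/-- Meet continuity: `x ≤ sup D` implies `x ∈ cl(↓D ∩ ↓x)`. -/
def MeetContinuous (L : Type*) [Preorder L] : Prop :=
  ∀ x : L, ∀ D : Set L, D.Nonempty → DirectedOn (· ≤ ·) D → ∀ s, IsLUB D s → x ≤ s →
    x ∈ scottCl (dw D ∩ dw ({x} : Set L))

/-- The way-below relation `x ≪ y`. -/
def wayBelow (x y : L) : Prop :=
  ∀ D : Set L, D.Nonempty → DirectedOn (· ≤ ·) D → ∀ s, IsLUB D s → y ≤ s →
    (D ∩ up ({x} : Set L)).Nonempty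

/-- The weakly way-below relation `x ≪_w y`. -/
def weaklyWayBelow (x y : L) : Prop :=
  ∀ D : Set L, D.Nonempty → DirectedOn (· ≤ ·) D → IsLUB D y →
    (D ∩ up ({x} : Set L)).Nonempty

/-- A continuous poset: each `⇓x` is directed with supremum `x`. -/
def ContinuousPoset (L : Type*) [Preorder L] : Prop :=
  ∀ x : L, {y | wayBelow y x}.Nonempty ∧ DirectedOn (· ≤ ·) {y | wayBelow y x} ∧
    IsLUB {y | wayBelow y x} x

/-- An exact poset: each `⇓_w x` is directed with supremum `x`. -/
def ExactPoset (L : Type*) [Preorder L] : Prop :=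
  ∀ x : L, {y | weaklyWayBelow y x}.Nonempty ∧ DirectedOn (· ≤ ·) {y | weaklyWayBelow y x} ∧
    IsLUB {y | weaklyWayBelow y x} x

/-- `F ≪ x` for a set `F`: every directed `D` with `sup D ≥ x` meets `↑F`. -/
def finWayBelow (F : Set L) (x : L) : Prop :=
  ∀ D : Set L, D.Nonempty → DirectedOn (· ≤ ·) D → ∀ s, IsLUB D s → x ≤ s →
    (D ∩ up F).Nonempty

/-- A quasicontinuous poset: each `fin(x)` is a directed family (Smyth preorder)
with `↑x = ⋂_{F ∈ fin(x)} ↑F`. -/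
def QuasicontinuousPoset (L : Type*) [Preorder L] : Prop :=
  ∀ x : L, {F : Set L | F.Finite ∧ finWayBelow F x}.Nonempty ∧
    DirectedOn (fun F G => up G ⊆ up F) {F : Set L | F.Finite ∧ finWayBelow F x} ∧
    up ({x} : Set L) = ⋂ F ∈ {F : Set L | F.Finite ∧ finWayBelow F x}, up F

/-- A dcpo: every (nonempty) directed subset has a least upper bound. -/
def IsDcpo (L : Type*) [Preorder L] : Prop :=
  ∀ D : Set L, D.Nonempty → DirectedOn (· ≤ ·) D → ∃ x, IsLUB D x

end OrderDefs

/-!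
Scott-closed sets are lower sets closed under directed suprema, so `A' ⊆ cl A` in any preorder,
and `x ≤ sup D` puts `x` in `cl D`. One-step closure then yields a directed `E ⊆ ↓D` with
`sup E = x`; since `E` also lies below `x`, it witnesses `x ∈ (↓D ∩ ↓x)' ⊆ cl (↓D ∩ ↓x)`.
-/

section ScottClosure

variable {L : Type*} [Preorder L]

lemma isLowerSet_scottCl (A : Set L) : IsLowerSet (scottCl A) :=
  letI := Topology.scott L univ
  haveI : Topology.IsScott L univ := ⟨rfl⟩
  Topology.IsScott.isLowerSet_of_isClosed isClosed_closure

lemma dirSupClosed_scottCl (A : Set L) : DirSupClosed (scottCl A) :=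
  letI := Topology.scott L univ
  haveI : Topology.IsScott L univ := ⟨rfl⟩
  Topology.IsScott.dirSupClosed_of_isClosed isClosed_closure

lemma subset_scottCl (A : Set L) : A ⊆ scottCl A :=
  @subset_closure L (Topology.scott L univ) A

lemma isLUB_mem_scottCl {D : Set L} (hD : D.Nonempty) (hdir : DirectedOn (· ≤ ·) D) {s : L}
    (hs : IsLUB D s) : s ∈ scottCl D :=
  dirSupClosed_scottCl D (subset_scottCl D) hD hdir hs

lemma dw_subset_scottCl (A : Set L) : dw A ⊆ scottCl A :=
  fun _ ⟨_, ha, hxa⟩ ↦ isLowerSet_scottCl A hxa (subset_scottCl A ha)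

lemma oneStep_subset_scottCl (A : Set L) : oneStep A ⊆ scottCl A :=
  fun _ ⟨_, hEA, hE, hdir, hx⟩ ↦
    dirSupClosed_scottCl A (hEA.trans (dw_subset_scottCl A)) hE hdir hx

lemma mem_oneStep_dw_inter_dw_singleton {A : Set L} {x : L} (hx : x ∈ oneStep A) :
    x ∈ oneStep (dw A ∩ dw {x}) := by
  obtain ⟨E, hEA, hE, hdir, hEx⟩ := hx
  exact ⟨E, fun e he ↦ ⟨e, ⟨hEA he, x, rfl, hEx.1 he⟩, le_rfl⟩, hE, hdir, hEx⟩

end ScottClosure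

/-- Every poset with one-step closure is meet continuous. -/
theorem meetContinuous_of_hasOneStepClosure {L : Type*} [PartialOrder L]
    (h : HasOneStepClosure L) : MeetContinuous L := by
  intro x D hD hdir s hs hxs
  have hx : x ∈ oneStep D := h D ▸ isLowerSet_scottCl D hxs (isLUB_mem_scottCl hD hdir hs)
  exact oneStep_subset_scottCl _ (mem_oneStep_dw_inter_dw_singleton hx)
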